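/- arXiv:2504.05200 — 5 statements merged into one kernel-verified Lean document; each statement's English description precedes it below -/
import Mathlib

section
/- Let C be a totally symmetric trilinear form on an n-dimensional real inner product space (V,g) with decomposition C = U + sym(u ⊗ g), where U is totally symmetric trace-free and u is a linear form. Define endomorphisms C_X, U_X by g(C_X Y, Z) = C(X,Y,Z) and g(U_X Y, Z) = U(X,Y,Z), and set 𝒞(X,Y) = tr(C_X C_Y), 𝒰(X,Y) = tr(U_X U_Y). Then the trace-free part of 𝒞 satisfies: 𝒞(X,Y) − (1/n)tr_g(𝒞)g(X,Y) = 𝒰(X,Y) − (1/n)tr_g(𝒰)g(X,Y) + 4U(X,Y,û) + (n+6)(u(X)u(Y) − (1/n)|u|²g(X,Y)), where û is the vector dual to u. -/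
open scoped RealInnerProductSpace

/-- Trace-free part of `𝒞(X,Y) = tr(C_X C_Y)` in terms of the cubic decomposition. -/
theorem stmt_2 {V : Type*} [NormedAddCommGroup V] [InnerProductSpace ℝ V]
    [FiniteDimensional ℝ V] {n : ℕ} (hdim : Module.finrank ℝ V = n)
    (b : OrthonormalBasis (Fin n) ℝ V)
    (C U : V →ₗ[ℝ] V →ₗ[ℝ] V →ₗ[ℝ] ℝ) (u : V →ₗ[ℝ] ℝ) (uhat : V)
    (hCsym : ∀ X Y Z : V, C X Y Z = C Y X Z ∧ C X Y Z = C X Z Y)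
    (hUsym : ∀ X Y Z : V, U X Y Z = U Y X Z ∧ U X Y Z = U X Z Y)
    (hUtf : ∀ Z : V, ∑ i, U (b i) (b i) Z = 0)
    (hdec : ∀ X Y Z : V, C X Y Z =
      U X Y Z + u X * ⟪Y, Z⟫ + u Y * ⟪X, Z⟫ + u Z * ⟪X, Y⟫)
    (huhat : ∀ X : V, ⟪uhat, X⟫ = u X)
    (Ccal Ucal : V → V → ℝ)
    (hCcal : ∀ X Y : V, Ccal X Y = ∑ i, ∑ j, C X (b i) (b j) * C Y (b i) (b j))
    (hUcal : ∀ X Y : V, Ucal X Y = ∑ i, ∑ j, U X (b i) (b j) * U Y (b i) (b j)) :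
    ∀ X Y : V,
      Ccal X Y - (1 / (n : ℝ)) * (∑ k, Ccal (b k) (b k)) * ⟪X, Y⟫ =
        Ucal X Y - (1 / (n : ℝ)) * (∑ k, Ucal (b k) (b k)) * ⟪X, Y⟫
        + 4 * U X Y uhat
        + ((n : ℝ) + 6) * (u X * u Y - (1 / (n : ℝ)) * ⟪uhat, uhat⟫ * ⟪X, Y⟫) := by
  -- expansion of a linear functional over the orthonormal basis
  have key : ∀ (f : V →ₗ[ℝ] ℝ) (Z : V), ∑ i, ⟪Z, b i⟫ * f (b i) = f Z := by
    intro f Z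
    conv_rhs => rw [← b.sum_repr' Z]
    simp [real_inner_comm, mul_comm]
  have hite : ∀ i j, ⟪b i, b j⟫ = if i = j then (1:ℝ) else 0 :=
    fun i j => orthonormal_iff_ite.mp b.orthonormal i j
  have hbu : ∀ i, u (b i) = ⟪uhat, b i⟫ := fun i => (huhat (b i)).symm
  have h5 : ∀ Z : V, ∑ i, u (b i) * ⟪Z, b i⟫ = u Z := by
    intro Z
    rw [← key u Z]
    exact Finset.sum_congr rfl fun i _ => mul_comm _ _
  have h7 : ∀ Z W : V, ∑ j, ⟪Z, b j⟫ * ⟪W, b j⟫ = ⟪Z, W⟫ := by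
    intro Z W
    rw [← b.sum_inner_mul_inner Z W]
    exact Finset.sum_congr rfl fun j _ => by rw [real_inner_comm (b j) W]
  have h8 : ∑ i, u (b i) * u (b i) = ⟪uhat, uhat⟫ := by
    rw [huhat uhat, ← key u uhat]
    exact Finset.sum_congr rfl fun i _ => by rw [hbu i]
  have hdiag : ∑ k, ⟪b k, b k⟫ = (n : ℝ) := by
    simp [hite]
  -- trace-free contractions
  have hU0 : ∀ Z : V, (∑ i, ∑ j, U Z (b i) (b j) * ⟪b i, b j⟫) = 0 := by
    intro Z
    have h1 : ∀ i, (∑ j, U Z (b i) (b j) * ⟪b i, b j⟫) = U (b i) (b i) Z := by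
      intro i
      have : (∑ j, U Z (b i) (b j) * ⟪b i, b j⟫) = U Z (b i) (b i) := by
        simp [hite]
      rw [this, (hUsym Z (b i) (b i)).1, (hUsym (b i) Z (b i)).2]
    rw [Finset.sum_congr rfl fun i _ => h1 i]
    exact hUtf Z
  have hU2 : ∀ W Z : V,
      (∑ i, ∑ j, U W (b i) (b j) * (u (b i) * ⟪Z, b j⟫)) = U W Z uhat := by
    intro W Z
    have h1 : ∀ i, (∑ j, U W (b i) (b j) * (u (b i) * ⟪Z, b j⟫))
        = u (b i) * U W Z (b i) := by
      intro i
      calc (∑ j, U W (b i) (b j) * (u (b i) * ⟪Z, b j⟫))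
          = u (b i) * ∑ j, ⟪Z, b j⟫ * U W (b i) (b j) := by
            rw [Finset.mul_sum]
            exact Finset.sum_congr rfl fun j _ => by ring
        _ = u (b i) * U W (b i) Z := by rw [key (U W (b i)) Z]
        _ = u (b i) * U W Z (b i) := by rw [(hUsym W (b i) Z).2]
    rw [Finset.sum_congr rfl fun i _ => h1 i, ← key (U W Z) uhat]
    exact Finset.sum_congr rfl fun i _ => by rw [hbu i]
  have hU3 : ∀ W Z : V,
      (∑ i, ∑ j, U W (b i) (b j) * (u (b j) * ⟪Z, b i⟫)) = U W Z uhat := by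
    intro W Z
    have h1 : ∀ i, (∑ j, U W (b i) (b j) * (u (b j) * ⟪Z, b i⟫))
        = ⟪Z, b i⟫ * U W uhat (b i) := by
      intro i
      calc (∑ j, U W (b i) (b j) * (u (b j) * ⟪Z, b i⟫))
          = ⟪Z, b i⟫ * ∑ j, ⟪uhat, b j⟫ * U W (b i) (b j) := by
            rw [Finset.mul_sum]
            exact Finset.sum_congr rfl fun j _ => by rw [← hbu j]; ring
        _ = ⟪Z, b i⟫ * U W (b i) uhat := by rw [key (U W (b i)) uhat]
        _ = ⟪Z, b i⟫ * U W uhat (b i) := by rw [(hUsym W (b i) uhat).2]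
    rw [Finset.sum_congr rfl fun i _ => h1 i, key (U W uhat) Z,
      (hUsym W uhat Z).2]
  -- pure metric contractions
  have hdd : (∑ i, ∑ j, ⟪b i, b j⟫ * ⟪b i, b j⟫) = (n : ℝ) := by
    have h1 : ∀ i : Fin n, (∑ j, ⟪b i, b j⟫ * ⟪b i, b j⟫) = 1 := by
      intro i; simp [hite]
    rw [Finset.sum_congr rfl fun i _ => h1 i]
    simp
  have hδ : ∀ Z : V, (∑ i, ∑ j, ⟪b i, b j⟫ * (u (b i) * ⟪Z, b j⟫)) = u Z := by
    intro Z
    have h1 : ∀ i, (∑ j, ⟪b i, b j⟫ * (u (b i) * ⟪Z, b j⟫))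
        = u (b i) * ⟪Z, b i⟫ := by
      intro i; simp [hite]
    rw [Finset.sum_congr rfl fun i _ => h1 i]
    exact h5 Z
  have hδ' : ∀ Z : V, (∑ i, ∑ j, ⟪b i, b j⟫ * (u (b j) * ⟪Z, b i⟫)) = u Z := by
    intro Z
    have h1 : ∀ i, (∑ j, ⟪b i, b j⟫ * (u (b j) * ⟪Z, b i⟫))
        = u (b i) * ⟪Z, b i⟫ := by
      intro i; simp [hite]
    rw [Finset.sum_congr rfl fun i _ => h1 i]
    exact h5 Z
  -- the main pointwise identity
  have hmain : ∀ X Y : V, Ccal X Y = Ucal X Y + 4 * U X Y uhat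
      + ((n : ℝ) + 6) * (u X * u Y) + 2 * (⟪uhat, uhat⟫ * ⟪X, Y⟫) := by
    intro X Y
    have expand : (∑ i, ∑ j, C X (b i) (b j) * C Y (b i) (b j)) =
        (∑ i, ∑ j, U X (b i) (b j) * U Y (b i) (b j))
      + u Y * (∑ i, ∑ j, U X (b i) (b j) * ⟪b i, b j⟫)
      + u X * (∑ i, ∑ j, U Y (b i) (b j) * ⟪b i, b j⟫)
      + (∑ i, ∑ j, U X (b i) (b j) * (u (b i) * ⟪Y, b j⟫))
      + (∑ i, ∑ j, U X (b i) (b j) * (u (b j) * ⟪Y, b i⟫))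
      + (∑ i, ∑ j, U Y (b i) (b j) * (u (b i) * ⟪X, b j⟫))
      + (∑ i, ∑ j, U Y (b i) (b j) * (u (b j) * ⟪X, b i⟫))
      + u X * u Y * (∑ i, ∑ j, ⟪b i, b j⟫ * ⟪b i, b j⟫)
      + u X * (∑ i, ∑ j, ⟪b i, b j⟫ * (u (b i) * ⟪Y, b j⟫))
      + u X * (∑ i, ∑ j, ⟪b i, b j⟫ * (u (b j) * ⟪Y, b i⟫))
      + u Y * (∑ i, ∑ j, ⟪b i, b j⟫ * (u (b i) * ⟪X, b j⟫))
      + u Y * (∑ i, ∑ j, ⟪b i, b j⟫ * (u (b j) * ⟪X, b i⟫))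
      + (∑ i, ∑ j, (u (b i) * ⟪X, b j⟫) * (u (b i) * ⟪Y, b j⟫))
      + (∑ i, ∑ j, (u (b i) * ⟪X, b j⟫) * (u (b j) * ⟪Y, b i⟫))
      + (∑ i, ∑ j, (u (b j) * ⟪X, b i⟫) * (u (b i) * ⟪Y, b j⟫))
      + (∑ i, ∑ j, (u (b j) * ⟪X, b i⟫) * (u (b j) * ⟪Y, b i⟫)) := by
      simp only [Finset.mul_sum, ← Finset.sum_add_distrib]
      refine Finset.sum_congr rfl fun i _ => ?_
      refine Finset.sum_congr rfl fun j _ => ?_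
      rw [hdec X (b i) (b j), hdec Y (b i) (b j)]
      ring
    have hG : ∀ (f g : Fin n → ℝ),
        (∑ i, ∑ j, f i * g j) = (∑ i, f i) * (∑ j, g j) := by
      intro f g
      calc (∑ i, ∑ j, f i * g j) = ∑ i, f i * ∑ j, g j := by
            exact Finset.sum_congr rfl fun i _ => (Finset.mul_sum _ _ _).symm
        _ = (∑ i, f i) * ∑ j, g j := by rw [Finset.sum_mul]
    have hG1 : (∑ i, ∑ j, (u (b i) * ⟪X, b j⟫) * (u (b i) * ⟪Y, b j⟫))
        = ⟪uhat, uhat⟫ * ⟪X, Y⟫ := by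
      calc (∑ i, ∑ j, (u (b i) * ⟪X, b j⟫) * (u (b i) * ⟪Y, b j⟫))
          = ∑ i, ∑ j, (u (b i) * u (b i)) * (⟪X, b j⟫ * ⟪Y, b j⟫) :=
            Finset.sum_congr rfl fun i _ => Finset.sum_congr rfl fun j _ => by ring
        _ = (∑ i, u (b i) * u (b i)) * (∑ j, ⟪X, b j⟫ * ⟪Y, b j⟫) := hG _ _
        _ = ⟪uhat, uhat⟫ * ⟪X, Y⟫ := by rw [h8, h7 X Y]
    have hG4 : (∑ i, ∑ j, (u (b j) * ⟪X, b i⟫) * (u (b j) * ⟪Y, b i⟫))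
        = ⟪uhat, uhat⟫ * ⟪X, Y⟫ := by
      calc (∑ i, ∑ j, (u (b j) * ⟪X, b i⟫) * (u (b j) * ⟪Y, b i⟫))
          = ∑ i, ∑ j, (⟪X, b i⟫ * ⟪Y, b i⟫) * (u (b j) * u (b j)) :=
            Finset.sum_congr rfl fun i _ => Finset.sum_congr rfl fun j _ => by ring
        _ = (∑ i, ⟪X, b i⟫ * ⟪Y, b i⟫) * (∑ j, u (b j) * u (b j)) := hG _ _
        _ = ⟪uhat, uhat⟫ * ⟪X, Y⟫ := by rw [h8, h7 X Y]; ring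
    have hG2 : (∑ i, ∑ j, (u (b i) * ⟪X, b j⟫) * (u (b j) * ⟪Y, b i⟫))
        = u X * u Y := by
      calc (∑ i, ∑ j, (u (b i) * ⟪X, b j⟫) * (u (b j) * ⟪Y, b i⟫))
          = ∑ i, ∑ j, (u (b i) * ⟪Y, b i⟫) * (u (b j) * ⟪X, b j⟫) :=
            Finset.sum_congr rfl fun i _ => Finset.sum_congr rfl fun j _ => by ring
        _ = (∑ i, u (b i) * ⟪Y, b i⟫) * (∑ j, u (b j) * ⟪X, b j⟫) := hG _ _
        _ = u X * u Y := by rw [h5 Y, h5 X]; ring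
    have hG3 : (∑ i, ∑ j, (u (b j) * ⟪X, b i⟫) * (u (b i) * ⟪Y, b j⟫))
        = u X * u Y := by
      calc (∑ i, ∑ j, (u (b j) * ⟪X, b i⟫) * (u (b i) * ⟪Y, b j⟫))
          = ∑ i, ∑ j, (u (b i) * ⟪X, b i⟫) * (u (b j) * ⟪Y, b j⟫) :=
            Finset.sum_congr rfl fun i _ =>
              Finset.sum_congr rfl fun j _ => by ring
        _ = (∑ i, u (b i) * ⟪X, b i⟫) * (∑ j, u (b j) * ⟪Y, b j⟫) := hG _ _
        _ = u X * u Y := by rw [h5 Y, h5 X]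
    rw [hCcal X Y, expand, hU0 X, hU0 Y, hU2 X Y, hU3 X Y, hU2 Y X, hU3 Y X,
      hdd, hδ Y, hδ' Y, hδ X, hδ' X, hG1, hG2, hG3, hG4,
      (hUsym Y X uhat).1, ← hUcal X Y]
    ring
  -- trace of 𝒞
  have htr : (∑ k, Ccal (b k) (b k)) =
      (∑ k, Ucal (b k) (b k)) + (3 * (n : ℝ) + 6) * ⟪uhat, uhat⟫ := by
    rw [Finset.sum_congr rfl fun k _ => hmain (b k) (b k)]
    simp only [Finset.sum_add_distrib, ← Finset.mul_sum]
    rw [hUtf uhat, h8, hdiag]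
    ring
  intro X Y
  by_cases hn : n = 0
  · subst hn
    have hV : Subsingleton V := by
      exact Module.finrank_zero_iff.mp hdim
    have hX : X = 0 := Subsingleton.elim _ _
    subst hX
    simp [hCcal, hUcal]
  · have hn' : (n : ℝ) ≠ 0 := Nat.cast_ne_zero.mpr hn
    rw [hmain X Y, htr]
    field_simp
    ring
end

section
/- Let (V,g) be a 2-dimensional real inner product space and let C be a totally symmetric, trace-free trilinear form on V. Define C_X ∈ End(V) by g(C_X Y, Z) = C(X,Y,Z) and 𝒞(X,Y) = tr(C_X C_Y). Then 𝒞 = (1/2)|C|² g, where |C|² = Σ_{i,j,k} C(e_i,e_j,e_k)² for an orthonormal basis. -/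
open scoped RealInnerProductSpace

/-- In dimension 2, for a totally symmetric trace-free cubic `C`,
`𝒞 = (1/2)|C|² g` where `𝒞(X,Y) = tr(C_X C_Y)`. -/
theorem stmt_3 {V : Type*} [NormedAddCommGroup V] [InnerProductSpace ℝ V]
    [FiniteDimensional ℝ V] (hdim : Module.finrank ℝ V = 2)
    (b : OrthonormalBasis (Fin 2) ℝ V)
    (C : V →ₗ[ℝ] V →ₗ[ℝ] V →ₗ[ℝ] ℝ)
    (hCsym : ∀ X Y Z : V, C X Y Z = C Y X Z ∧ C X Y Z = C X Z Y)
    (hCtf : ∀ Z : V, ∑ i, C (b i) (b i) Z = 0) :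
    ∀ X Y : V, (∑ i, ∑ j, C X (b i) (b j) * C Y (b i) (b j)) =
      (1 / 2) * (∑ i, ∑ j, ∑ k, (C (b i) (b j) (b k))^2) * ⟪X, Y⟫ := by
  have hs1 : ∀ X Y Z, C X Y Z = C Y X Z := fun X Y Z => (hCsym X Y Z).1
  have hs2 : ∀ X Y Z, C X Y Z = C X Z Y := fun X Y Z => (hCsym X Y Z).2
  set S := ∑ i, ∑ j, ∑ k, (C (b i) (b j) (b k))^2 with hS
  -- package both sides as bilinear maps
  let B1 : V →ₗ[ℝ] V →ₗ[ℝ] ℝ := LinearMap.mk₂ ℝ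
    (fun X Y => ∑ i, ∑ j, C X (b i) (b j) * C Y (b i) (b j))
    (by intro x y z; simp [map_add, LinearMap.add_apply, add_mul, Finset.sum_add_distrib])
    (by
      intro a x y
      simp only [map_smul, LinearMap.smul_apply, smul_eq_mul, Finset.mul_sum]
      congr 1; ext i; congr 1; ext j; ring)
    (by intro x y z; simp [map_add, LinearMap.add_apply, mul_add, Finset.sum_add_distrib])
    (by
      intro a x y
      simp only [map_smul, LinearMap.smul_apply, smul_eq_mul, Finset.mul_sum]
      congr 1; ext i; congr 1; ext j; ring)
  let B2 : V →ₗ[ℝ] V →ₗ[ℝ] ℝ := LinearMap.mk₂ ℝ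
    (fun X Y => (1 / 2) * S * ⟪X, Y⟫)
    (by intro x y z; simp [inner_add_left, mul_add])
    (by intro a x y; simp [real_inner_smul_left]; ring)
    (by intro x y z; simp [inner_add_right, mul_add])
    (by intro a x y; simp [real_inner_smul_right]; ring)
  have key : B1 = B2 := by
    apply b.toBasis.ext
    intro p
    apply b.toBasis.ext
    intro q
    have hb : ∀ i j : Fin 2, ⟪b i, b j⟫ = if i = j then (1:ℝ) else 0 := by
      have := b.orthonormal
      rw [orthonormal_iff_ite] at this
      exact this
    have t0 := hCtf (b 0)
    have t1 := hCtf (b 1)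
    rw [Fin.sum_univ_two] at t0 t1
    have h010 : C (b 0) (b 1) (b 0) = C (b 0) (b 0) (b 1) := by rw [hs2]
    have h100 : C (b 1) (b 0) (b 0) = C (b 0) (b 0) (b 1) := by rw [hs1, hs2]
    have h110 : C (b 1) (b 1) (b 0) = - C (b 0) (b 0) (b 0) := by linarith
    have h111 : C (b 1) (b 1) (b 1) = - C (b 0) (b 0) (b 1) := by linarith
    have h101 : C (b 1) (b 0) (b 1) = - C (b 0) (b 0) (b 0) := by rw [hs2]; exact h110
    have h011 : C (b 0) (b 1) (b 1) = - C (b 0) (b 0) (b 0) := by rw [hs1]; exact h101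
    simp only [B1, B2, LinearMap.mk₂_apply, OrthonormalBasis.coe_toBasis, hS,
      Fin.sum_univ_two]
    fin_cases p <;> fin_cases q <;>
      simp only [Fin.zero_eta, Fin.mk_one, Fin.isValue] <;>
      simp only [h010, h100, h110, h111, h101, h011] <;> simp [hb] <;> ring
  intro X Y
  have h2 := LinearMap.congr_fun (LinearMap.congr_fun key X) Y
  simpa [B1, B2, LinearMap.mk₂_apply] using h2
end

section
/- Let (V,g) be a real inner product space of dimension n ≥ 3, let S be a totally symmetric trace-free trilinear form on V, and let t ∈ V* be a linear form with dual vector grad t. Define S_X ∈ End(V) by g(S_X Y,Z) = S(X,Y,Z), 𝒮(X,Y) = tr(S_X S_Y), and the (0,4)-tensor S₁(X,Y,Z,W) := g(S_X S_Y Z, W) + 3 S(X,Y,W)·t(Z) + S(X,Y,Z)·t(W) + [ (4/(n−2))𝒮(Y,Z) − 3S(Y,Z, grad t) ]·g(X,W). Let Φ := Π_{Sym³}S₁ be the symmetrisation of S₁ over its first three arguments. Then the g-trace of Φ over its second and third arguments is φ(X,W) = (2/3)·((n+2)/(n−2))·𝒮(X,W) + (4/(3(n−2)))·|S|²·g(X,W),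 where |S|² = tr_g(𝒮). -/
open scoped RealInnerProductSpace

/-- Trace of the symmetrisation `Φ = Π_{Sym³}S₁` over its second and third arguments. -/
theorem stmt_8 {V : Type*} [NormedAddCommGroup V] [InnerProductSpace ℝ V]
    [FiniteDimensional ℝ V] {n : ℕ} (hn : 3 ≤ n) (hdim : Module.finrank ℝ V = n)
    (b : OrthonormalBasis (Fin n) ℝ V)
    (S : V →ₗ[ℝ] V →ₗ[ℝ] V →ₗ[ℝ] ℝ)
    (hSsym : ∀ X Y Z : V, S X Y Z = S Y X Z ∧ S X Y Z = S X Z Y)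
    (hStf : ∀ Z : V, ∑ i, S (b i) (b i) Z = 0)
    (t : V →ₗ[ℝ] ℝ) (gradt : V) (hgrad : ∀ X : V, ⟪gradt, X⟫ = t X)
    (Scal : V → V → ℝ)
    (hScal : ∀ X Y : V, Scal X Y = ∑ i, ∑ j, S X (b i) (b j) * S Y (b i) (b j))
    (S1 : V → V → V → V → ℝ)
    (hS1 : ∀ X Y Z W : V, S1 X Y Z W =
      (∑ i, S X W (b i) * S Y Z (b i))
      + 3 * S X Y W * t Z + S X Y Z * t W
      + ((4 / ((n : ℝ) - 2)) * Scal Y Z - 3 * S Y Z gradt) * ⟪X, W⟫)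
    (Φ : V → V → V → V → ℝ)
    (hΦ : ∀ X Y Z W : V, Φ X Y Z W = (1 / 6) *
      (S1 X Y Z W + S1 Y Z X W + S1 Z X Y W
        + S1 Y X Z W + S1 X Z Y W + S1 Z Y X W)) :
    ∀ X W : V, ∑ i, Φ X (b i) (b i) W =
      (2 / 3) * (((n : ℝ) + 2) / ((n : ℝ) - 2)) * Scal X W
      + (4 / (3 * ((n : ℝ) - 2))) * (∑ k, Scal (b k) (b k)) * ⟪X, W⟫ := by
  intro X W
  have hsym1 : ∀ A B C : V, S A B C = S B A C := fun A B C => (hSsym A B C).1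
  have hsym2 : ∀ A B C : V, S A B C = S A C B := fun A B C => (hSsym A B C).2
  have hne : ((n : ℝ) - 2) ≠ 0 := by
    have h3 : (3 : ℝ) ≤ (n : ℝ) := by exact_mod_cast hn
    linarith
  -- expansion of a linear form against the basis
  have hexp : ∀ (F : V →ₗ[ℝ] ℝ) (w : V), ∑ i, ⟪b i, w⟫ * F (b i) = F w := by
    intro F w
    calc ∑ i, ⟪b i, w⟫ * F (b i) = F (∑ i, ⟪b i, w⟫ • b i) := by
          rw [map_sum]; simp [smul_eq_mul]
      _ = F w := by rw [b.sum_repr' w]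
  have hexp3 : ∀ (A C w : V), ∑ i, S A (b i) C * ⟪b i, w⟫ = S A w C := by
    intro A C w
    have h := hexp ((S A).flip C) w
    simp only [LinearMap.flip_apply] at h
    calc ∑ i, S A (b i) C * ⟪b i, w⟫ = ∑ i, ⟪b i, w⟫ * S A (b i) C := by
          exact Finset.sum_congr rfl fun i _ => mul_comm _ _
      _ = S A w C := h
  have ht : ∀ i, t (b i) = ⟪b i, gradt⟫ := fun i => by
    rw [← hgrad (b i), real_inner_comm]
  have htrace1 : ∀ Z : V, ∑ i, S (b i) Z (b i) = 0 := by
    intro Z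
    calc ∑ i, S (b i) Z (b i) = ∑ i, S (b i) (b i) Z :=
          Finset.sum_congr rfl fun i _ => hsym2 _ _ _
      _ = 0 := hStf Z
  have htrace2 : ∀ Z : V, ∑ i, S Z (b i) (b i) = 0 := by
    intro Z
    calc ∑ i, S Z (b i) (b i) = ∑ i, S (b i) (b i) Z :=
          Finset.sum_congr rfl fun i _ => by rw [hsym1, hsym2]
      _ = 0 := hStf Z
  have hScalComm : ∀ A C : V, Scal A C = Scal C A := by
    intro A C
    rw [hScal, hScal]
    exact Finset.sum_congr rfl fun i _ => Finset.sum_congr rfl fun j _ => mul_comm _ _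
  have hScalLin : ∀ (w A : V), ∑ i, Scal (b i) A * ⟪b i, w⟫ = Scal w A := by
    intro w A
    simp only [hScal]
    calc ∑ i, (∑ j, ∑ k, S (b i) (b j) (b k) * S A (b j) (b k)) * ⟪b i, w⟫
        = ∑ i, ∑ j, ∑ k, (S (b j) (b i) (b k) * ⟪b i, w⟫) * S A (b j) (b k) := by
          refine Finset.sum_congr rfl fun i _ => ?_
          rw [Finset.sum_mul]
          refine Finset.sum_congr rfl fun j _ => ?_
          rw [Finset.sum_mul]
          refine Finset.sum_congr rfl fun k _ => ?_
          rw [hsym1 (b i) (b j) (b k)]; ring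
      _ = ∑ j, ∑ k, (∑ i, S (b j) (b i) (b k) * ⟪b i, w⟫) * S A (b j) (b k) := by
          rw [Finset.sum_comm]
          refine Finset.sum_congr rfl fun j _ => ?_
          rw [Finset.sum_comm]
          refine Finset.sum_congr rfl fun k _ => ?_
          rw [Finset.sum_mul]
      _ = ∑ j, ∑ k, S w (b j) (b k) * S A (b j) (b k) := by
          refine Finset.sum_congr rfl fun j _ => Finset.sum_congr rfl fun k _ => ?_
          rw [hexp3, ← hsym1]
  -- the three partial traces of S1
  have hA : ∑ i, S1 X (b i) (b i) W =
      3 * S X W gradt +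
        (4 / ((n : ℝ) - 2)) * (∑ k, Scal (b k) (b k)) * ⟪X, W⟫ := by
    simp only [hS1]
    rw [Finset.sum_add_distrib, Finset.sum_add_distrib, Finset.sum_add_distrib]
    have e1 : ∑ i, ∑ j, S X W (b j) * S (b i) (b i) (b j) = 0 := by
      rw [Finset.sum_comm]
      refine Finset.sum_eq_zero fun j _ => ?_
      rw [← Finset.mul_sum, hStf, mul_zero]
    have e2 : ∑ i, 3 * S X (b i) W * t (b i) = 3 * S X W gradt := by
      calc ∑ i, 3 * S X (b i) W * t (b i)
          = 3 * ∑ i, S X (b i) W * ⟪b i, gradt⟫ := by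
            rw [Finset.mul_sum]
            exact Finset.sum_congr rfl fun i _ => by rw [ht]; ring
        _ = 3 * S X gradt W := by rw [hexp3]
        _ = 3 * S X W gradt := by rw [hsym2]
    have e3 : ∑ i, S X (b i) (b i) * t W = 0 := by
      rw [← Finset.sum_mul, htrace2, zero_mul]
    have e4 : ∑ i, ((4 / ((n : ℝ) - 2)) * Scal (b i) (b i) - 3 * S (b i) (b i) gradt) * ⟪X, W⟫
        = (4 / ((n : ℝ) - 2)) * (∑ k, Scal (b k) (b k)) * ⟪X, W⟫ := by
      rw [← Finset.sum_mul]
      congr 1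
      rw [Finset.sum_sub_distrib, ← Finset.mul_sum, ← Finset.mul_sum, hStf, mul_zero, sub_zero]
    rw [e1, e2, e3, e4]; ring
  have hB : ∑ i, S1 (b i) (b i) X W =
      (1 + 4 / ((n : ℝ) - 2)) * Scal X W - 3 * S X W gradt := by
    simp only [hS1]
    rw [Finset.sum_add_distrib, Finset.sum_add_distrib, Finset.sum_add_distrib]
    have e1 : ∑ i, ∑ j, S (b i) W (b j) * S (b i) X (b j) = Scal X W := by
      rw [hScal]
      refine Finset.sum_congr rfl fun i _ => Finset.sum_congr rfl fun j _ => ?_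
      rw [hsym1 (b i) W (b j), hsym1 (b i) X (b j)]; ring
    have e2 : ∑ i, 3 * S (b i) (b i) W * t X = 0 := by
      rw [← Finset.sum_mul, ← Finset.mul_sum, hStf, mul_zero, zero_mul]
    have e3 : ∑ i, S (b i) (b i) X * t W = 0 := by
      rw [← Finset.sum_mul, hStf, zero_mul]
    have e4 : ∑ i, ((4 / ((n : ℝ) - 2)) * Scal (b i) X - 3 * S (b i) X gradt) * ⟪b i, W⟫
        = (4 / ((n : ℝ) - 2)) * Scal X W - 3 * S X W gradt := by
      have k1 : ∑ i, (4 / ((n : ℝ) - 2)) * Scal (b i) X * ⟪b i, W⟫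
          = (4 / ((n : ℝ) - 2)) * Scal X W := by
        calc ∑ i, (4 / ((n : ℝ) - 2)) * Scal (b i) X * ⟪b i, W⟫
            = (4 / ((n : ℝ) - 2)) * ∑ i, Scal (b i) X * ⟪b i, W⟫ := by
              rw [Finset.mul_sum]
              exact Finset.sum_congr rfl fun i _ => by ring
          _ = (4 / ((n : ℝ) - 2)) * Scal X W := by rw [hScalLin, hScalComm]
      have k2 : ∑ i, 3 * S (b i) X gradt * ⟪b i, W⟫ = 3 * S X W gradt := by
        calc ∑ i, 3 * S (b i) X gradt * ⟪b i, W⟫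
            = 3 * ∑ i, S X (b i) gradt * ⟪b i, W⟫ := by
              rw [Finset.mul_sum]
              exact Finset.sum_congr rfl fun i _ => by rw [hsym1]; ring
          _ = 3 * S X W gradt := by rw [hexp3]
      calc ∑ i, ((4 / ((n : ℝ) - 2)) * Scal (b i) X - 3 * S (b i) X gradt) * ⟪b i, W⟫
          = ∑ i, ((4 / ((n : ℝ) - 2)) * Scal (b i) X * ⟪b i, W⟫
              - 3 * S (b i) X gradt * ⟪b i, W⟫) := by
            exact Finset.sum_congr rfl fun i _ => by ring
        _ = _ := by rw [Finset.sum_sub_distrib, k1, k2]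
    rw [e1, e2, e3, e4]; ring
  have hC : ∑ i, S1 (b i) X (b i) W = (1 + 4 / ((n : ℝ) - 2)) * Scal X W := by
    simp only [hS1]
    rw [Finset.sum_add_distrib, Finset.sum_add_distrib, Finset.sum_add_distrib]
    have e1 : ∑ i, ∑ j, S (b i) W (b j) * S X (b i) (b j) = Scal X W := by
      rw [hScal]
      refine Finset.sum_congr rfl fun i _ => Finset.sum_congr rfl fun j _ => ?_
      rw [hsym1 (b i) W (b j)]; ring
    have e2 : ∑ i, 3 * S (b i) X W * t (b i) = 3 * S X W gradt := by
      calc ∑ i, 3 * S (b i) X W * t (b i)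
          = 3 * ∑ i, S X (b i) W * ⟪b i, gradt⟫ := by
            rw [Finset.mul_sum]
            exact Finset.sum_congr rfl fun i _ => by rw [ht, hsym1]; ring
        _ = 3 * S X gradt W := by rw [hexp3]
        _ = 3 * S X W gradt := by rw [hsym2]
    have e3 : ∑ i, S (b i) X (b i) * t W = 0 := by
      rw [← Finset.sum_mul, htrace1, zero_mul]
    have e4 : ∑ i, ((4 / ((n : ℝ) - 2)) * Scal X (b i) - 3 * S X (b i) gradt) * ⟪b i, W⟫
        = (4 / ((n : ℝ) - 2)) * Scal X W - 3 * S X W gradt := by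
      have k1 : ∑ i, (4 / ((n : ℝ) - 2)) * Scal X (b i) * ⟪b i, W⟫
          = (4 / ((n : ℝ) - 2)) * Scal X W := by
        calc ∑ i, (4 / ((n : ℝ) - 2)) * Scal X (b i) * ⟪b i, W⟫
            = (4 / ((n : ℝ) - 2)) * ∑ i, Scal (b i) X * ⟪b i, W⟫ := by
              rw [Finset.mul_sum]
              exact Finset.sum_congr rfl fun i _ => by rw [hScalComm X (b i)]; ring
          _ = (4 / ((n : ℝ) - 2)) * Scal X W := by rw [hScalLin, hScalComm]
      have k2 : ∑ i, 3 * S X (b i) gradt * ⟪b i, W⟫ = 3 * S X W gradt := by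
        calc ∑ i, 3 * S X (b i) gradt * ⟪b i, W⟫
            = 3 * ∑ i, S X (b i) gradt * ⟪b i, W⟫ := by
              rw [Finset.mul_sum]
              exact Finset.sum_congr rfl fun i _ => by ring
          _ = 3 * S X W gradt := by rw [hexp3]
      calc ∑ i, ((4 / ((n : ℝ) - 2)) * Scal X (b i) - 3 * S X (b i) gradt) * ⟪b i, W⟫
          = ∑ i, ((4 / ((n : ℝ) - 2)) * Scal X (b i) * ⟪b i, W⟫
              - 3 * S X (b i) gradt * ⟪b i, W⟫) := by
            exact Finset.sum_congr rfl fun i _ => by ring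
        _ = _ := by rw [Finset.sum_sub_distrib, k1, k2]
    rw [e1, e2, e3, e4]; ring
  calc ∑ i, Φ X (b i) (b i) W
      = (1 / 6) * ((∑ i, S1 X (b i) (b i) W) + (∑ i, S1 (b i) (b i) X W)
          + (∑ i, S1 (b i) X (b i) W) + (∑ i, S1 (b i) X (b i) W)
          + (∑ i, S1 X (b i) (b i) W) + (∑ i, S1 (b i) (b i) X W)) := by
        simp only [hΦ]
        rw [← Finset.mul_sum]
        congr 1
        rw [Finset.sum_add_distrib, Finset.sum_add_distrib, Finset.sum_add_distrib,
          Finset.sum_add_distrib, Finset.sum_add_distrib]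
    _ = _ := by
        rw [hA, hB, hC]
        field_simp
        ring
end

section
/- Let (V,G) be an n-dimensional real inner product space, n ≥ 2, C a totally symmetric trilinear form with cubic decomposition C = U + sym(u⊗G) (so (n+2)u(X) = tr_G C(X,·,·)), Ĉ(X,Y) the G-dual of C (i.e. G(Ĉ(X,Y),Z) = C(X,Y,Z)), û the dual vector of u, A a symmetric bilinear form with G-dual endomorphism Â. Define the Gauss-type curvature operator R(X,Y)Z := Ĉ(Y,Ĉ(X,Z)) − Ĉ(X,Ĉ(Y,Z)) + (1/2)(A(Y,Z)X − A(X,Z)Y + Â(X)G(Y,Z) − Â(Y)G(X,Z)). Then: (a) the Ricci contraction Ric(Y,Z) := tr(X ↦ R(X,Y)Z) equals 𝒞(Y,Z) − (n+2)C(Y,Z,û) + (1/2)[(n−2)A(Y,Z) + tr(Â)G(Y,Z)], where 𝒞(X,Y) = tr(C_X C_Y); and (b) the scalar contraction Scal := tr_G(Ric) satisfies Scal = |C|² − (n+2)²|u|² + (n−1)tr(Â) (the 'theorema egregium of relative differential geometry'). -/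
open scoped RealInnerProductSpace

/-- Ricci and scalar contractions of the Gauss-type curvature operator
(`theorema egregium of relative differential geometry'). -/
theorem stmt_11 {V : Type*} [NormedAddCommGroup V] [InnerProductSpace ℝ V]
    [FiniteDimensional ℝ V] {n : ℕ} (hn : 2 ≤ n) (hdim : Module.finrank ℝ V = n)
    (b : OrthonormalBasis (Fin n) ℝ V)
    (C : V →ₗ[ℝ] V →ₗ[ℝ] V →ₗ[ℝ] ℝ)
    (hCsym : ∀ X Y Z : V, C X Y Z = C Y X Z ∧ C X Y Z = C X Z Y)
    (u : V →ₗ[ℝ] ℝ)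
    (hu : ∀ X : V, ((n : ℝ) + 2) * u X = ∑ i, C X (b i) (b i))
    (uhat : V) (huhat : ∀ X : V, ⟪uhat, X⟫ = u X)
    (Chat : V → V → V) (hChat : ∀ X Y Z : V, ⟪Chat X Y, Z⟫ = C X Y Z)
    (A : V →ₗ[ℝ] V →ₗ[ℝ] ℝ) (hAsym : ∀ X Y : V, A X Y = A Y X)
    (Ahat : V → V) (hAhat : ∀ X Y : V, ⟪Ahat X, Y⟫ = A X Y)
    (R : V → V → V → V)
    (hR : ∀ X Y Z : V, R X Y Z = Chat Y (Chat X Z) - Chat X (Chat Y Z)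
      + (1 / 2 : ℝ) • (A Y Z • X - A X Z • Y + ⟪Y, Z⟫ • Ahat X - ⟪X, Z⟫ • Ahat Y))
    (Ric : V → V → ℝ) (hRic : ∀ Y Z : V, Ric Y Z = ∑ i, ⟪R (b i) Y Z, b i⟫)
    (Ccal : V → V → ℝ)
    (hCcal : ∀ X Y : V, Ccal X Y = ∑ i, ∑ j, C X (b i) (b j) * C Y (b i) (b j)) :
    (∀ Y Z : V, Ric Y Z = Ccal Y Z - ((n : ℝ) + 2) * C Y Z uhat
      + (1 / 2) * (((n : ℝ) - 2) * A Y Z + (∑ i, A (b i) (b i)) * ⟪Y, Z⟫)) ∧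
    (∑ i, Ric (b i) (b i) = (∑ k, Ccal (b k) (b k))
      - ((n : ℝ) + 2)^2 * (∑ i, (u (b i))^2)
      + ((n : ℝ) - 1) * (∑ i, A (b i) (b i))) := by
  have hCs1 : ∀ X Y Z : V, C X Y Z = C Y X Z := fun X Y Z => (hCsym X Y Z).1
  have hCs2 : ∀ X Y Z : V, C X Y Z = C X Z Y := fun X Y Z => (hCsym X Y Z).2
  -- first curvature term sums to 𝒞
  have h1 : ∀ Y Z : V, ∑ i, ⟪Chat Y (Chat (b i) Z), b i⟫ = Ccal Y Z := by
    intro Y Z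
    rw [hCcal]
    refine Finset.sum_congr rfl fun i _ => ?_
    have : ⟪Chat Y (Chat (b i) Z), b i⟫ = ⟪Chat Y (b i), Chat (b i) Z⟫ := by
      rw [hChat, hCs2, ← hChat]
    rw [this, ← OrthonormalBasis.sum_inner_mul_inner b]
    refine Finset.sum_congr rfl fun j _ => ?_
    rw [hChat, real_inner_comm, hChat, hCs1 (b i) Z (b j)]
  -- second curvature term sums to (n+2) C(Y,Z,û)
  have h2 : ∀ Y Z : V, ∑ i, ⟪Chat (b i) (Chat Y Z), b i⟫ = ((n : ℝ) + 2) * C Y Z uhat := by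
    intro Y Z
    have e : ∀ i, ⟪Chat (b i) (Chat Y Z), b i⟫ = C (Chat Y Z) (b i) (b i) := fun i => by
      rw [hChat, hCs1]
    simp only [e]
    rw [← hu, ← huhat, real_inner_comm, hChat]
  -- trace identities for A
  have h3 : ∀ Y Z : V, ∑ i, A (b i) Z * ⟪Y, b i⟫ = A Y Z := by
    intro Y Z
    have e : ∀ i : Fin n, A (b i) Z * ⟪Y, b i⟫ = ⟪Y, b i⟫ * ⟪b i, Ahat Z⟫ := fun i => by
      rw [hAsym, ← hAhat, real_inner_comm]; ring
    simp only [e, OrthonormalBasis.sum_inner_mul_inner]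
    rw [real_inner_comm, hAhat, hAsym]
  have h4 : ∀ Y Z : V, ∑ i, ⟪(b i : V), Z⟫ * ⟪Ahat Y, b i⟫ = A Y Z := by
    intro Y Z
    have e : ∀ i : Fin n, ⟪(b i : V), Z⟫ * ⟪Ahat Y, b i⟫ = ⟪Ahat Y, b i⟫ * ⟪(b i : V), Z⟫ :=
      fun i => by ring
    simp only [e, OrthonormalBasis.sum_inner_mul_inner]
    exact hAhat Y Z
  have h6 : ∑ i : Fin n, ⟪(b i : V), b i⟫ = (n : ℝ) := by
    have : ∀ i : Fin n, ⟪(b i : V), b i⟫ = 1 := fun i => by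
      rw [real_inner_self_eq_norm_sq, b.orthonormal.1 i]; norm_num
    simp [this]
  -- the Ricci formula
  have key : ∀ Y Z : V, Ric Y Z = Ccal Y Z - ((n : ℝ) + 2) * C Y Z uhat
      + (1 / 2) * (((n : ℝ) - 2) * A Y Z + (∑ i, A (b i) (b i)) * ⟪Y, Z⟫) := by
    intro Y Z
    rw [hRic]
    have expand : ∀ i, ⟪R (b i) Y Z, b i⟫
        = ⟪Chat Y (Chat (b i) Z), b i⟫ - ⟪Chat (b i) (Chat Y Z), b i⟫
          + (1 / 2 : ℝ) * (A Y Z * ⟪(b i : V), b i⟫ - A (b i) Z * ⟪Y, b i⟫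
            + ⟪Y, Z⟫ * ⟪Ahat (b i), b i⟫ - ⟪(b i : V), Z⟫ * ⟪Ahat Y, b i⟫) := by
      intro i
      rw [hR]
      simp only [inner_sub_left, inner_add_left, real_inner_smul_left]
    simp only [expand]
    rw [Finset.sum_add_distrib, Finset.sum_sub_distrib, ← Finset.mul_sum]
    rw [h1, h2]
    have split : ∑ i, (A Y Z * ⟪(b i : V), b i⟫ - A (b i) Z * ⟪Y, b i⟫
        + ⟪Y, Z⟫ * ⟪Ahat (b i), b i⟫ - ⟪(b i : V), Z⟫ * ⟪Ahat Y, b i⟫)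
        = A Y Z * (∑ i, ⟪(b i : V), b i⟫) - (∑ i, A (b i) Z * ⟪Y, b i⟫)
          + ⟪Y, Z⟫ * (∑ i, ⟪Ahat (b i), b i⟫) - ∑ i, ⟪(b i : V), Z⟫ * ⟪Ahat Y, b i⟫ := by
      rw [Finset.sum_sub_distrib, Finset.sum_add_distrib, Finset.sum_sub_distrib,
        Finset.mul_sum, Finset.mul_sum]
    rw [split, h3, h4, h6]
    have hAh : ∑ i, ⟪Ahat (b i), (b i : V)⟫ = ∑ i, A (b i) (b i) :=
      Finset.sum_congr rfl fun i _ => hAhat (b i) (b i)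
    rw [hAh]
    ring
  refine ⟨key, ?_⟩
  -- scalar curvature
  have hCuu : ∑ k, C (b k) (b k) uhat = ((n : ℝ) + 2) * (∑ i, (u (b i)) ^ 2) := by
    have e : ∀ k, C (b k) (b k) uhat = C uhat (b k) (b k) := fun k => by
      rw [hCs2, hCs1]
    simp only [e]
    rw [← hu, ← huhat]
    have : ⟪uhat, uhat⟫ = ∑ i, (u (b i)) ^ 2 := by
      rw [← OrthonormalBasis.sum_inner_mul_inner b uhat uhat]
      have hub : ∀ i : Fin n, ⟪(b i : V), uhat⟫ = u (b i) := fun i => by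
        rw [real_inner_comm]; exact huhat _
      simp only [huhat, hub, sq]
    rw [this]
  simp only [key]
  rw [Finset.sum_add_distrib, Finset.sum_sub_distrib, ← Finset.mul_sum, hCuu,
    ← Finset.mul_sum]
  have split2 : ∑ k, (((n : ℝ) - 2) * A (b k) (b k) + (∑ i, A (b i) (b i)) * ⟪(b k : V), b k⟫)
      = ((n : ℝ) - 2) * (∑ k, A (b k) (b k)) + (∑ i, A (b i) (b i)) * (n : ℝ) := by
    rw [Finset.sum_add_distrib, ← Finset.mul_sum, ← Finset.mul_sum, h6]
  rw [split2]
  ring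
end

section
/- Let (V,G) be an n-dimensional real inner product space, n ≥ 2, and let C be a totally symmetric trilinear form with cubic decomposition C = U + sym(u⊗G). Let Υ ∈ V* and define the conformally transformed data G' := Ω²G (Ω ≠ 0 a scalar), C'(X,Y,Z) := Ω²[C(X,Y,Z) − Υ(X)G(Y,Z) − Υ(Y)G(X,Z) − Υ(Z)G(X,Y)], with decomposition C' = U' + sym(u'⊗G') relative to G'. Then the G'-dual (1,2)-tensor of U' equals the G-dual (1,2)-tensor of U (i.e. Û' = Û), and u' = u − Υ. In particular the trace-free part of the cubic is conformally equivariant of weight 2: U' = Ω²U. -/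
open scoped RealInnerProductSpace

/-- Conformal transformation of the cubic: for `G' = Ω²G` and
`C' = Ω²[C - sym(Υ⊗G)]`, the decomposition data satisfy `Û' = Û`, `u' = u - Υ`
and `U' = Ω²U`. -/
theorem stmt_19 {V : Type*} [NormedAddCommGroup V] [InnerProductSpace ℝ V]
    [FiniteDimensional ℝ V] {n : ℕ} (hn : 2 ≤ n) (hdim : Module.finrank ℝ V = n)
    (b : OrthonormalBasis (Fin n) ℝ V)
    (C C' U U' : V →ₗ[ℝ] V →ₗ[ℝ] V →ₗ[ℝ] ℝ) (u u' Υ : V →ₗ[ℝ] ℝ)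
    (Ω : ℝ) (hΩ : Ω ≠ 0)
    (hCsym : ∀ X Y Z : V, C X Y Z = C Y X Z ∧ C X Y Z = C X Z Y)
    (hUsym : ∀ X Y Z : V, U X Y Z = U Y X Z ∧ U X Y Z = U X Z Y)
    (hU'sym : ∀ X Y Z : V, U' X Y Z = U' Y X Z ∧ U' X Y Z = U' X Z Y)
    (hUtf : ∀ Z : V, ∑ i, U (b i) (b i) Z = 0)
    -- `G'`-trace-freeness of `U'` is equivalent to `G`-trace-freeness:
    (hU'tf : ∀ Z : V, ∑ i, U' (b i) (b i) Z = 0)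
    -- decomposition of `C` with respect to `G`:
    (hdec : ∀ X Y Z : V, C X Y Z =
      U X Y Z + u X * ⟪Y, Z⟫ + u Y * ⟪X, Z⟫ + u Z * ⟪X, Y⟫)
    -- decomposition of `C'` with respect to `G' = Ω²G`:
    (hdec' : ∀ X Y Z : V, C' X Y Z =
      U' X Y Z + u' X * (Ω^2 * ⟪Y, Z⟫) + u' Y * (Ω^2 * ⟪X, Z⟫)
        + u' Z * (Ω^2 * ⟪X, Y⟫))
    (hC' : ∀ X Y Z : V, C' X Y Z =
      Ω^2 * (C X Y Z - Υ X * ⟪Y, Z⟫ - Υ Y * ⟪X, Z⟫ - Υ Z * ⟪X, Y⟫))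
    (Uhat Uhat' : V → V → V)
    -- `G`-dual of `U` and `G'`-dual of `U'`:
    (hUhat : ∀ X Y Z : V, ⟪Uhat X Y, Z⟫ = U X Y Z)
    (hUhat' : ∀ X Y Z : V, Ω^2 * ⟪Uhat' X Y, Z⟫ = U' X Y Z) :
    (∀ X Y : V, Uhat' X Y = Uhat X Y) ∧
    (∀ X : V, u' X = u X - Υ X) ∧
    (∀ X Y Z : V, U' X Y Z = Ω^2 * U X Y Z) := by
  set v : V →ₗ[ℝ] ℝ := u - Υ - u' with hvdef
  have hv_apply : ∀ Z : V, v Z = u Z - Υ Z - u' Z := fun Z => by simp [hvdef]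
  have key : ∀ X Y Z : V, U' X Y Z - Ω^2 * U X Y Z
      = Ω^2 * (v X * ⟪Y, Z⟫ + v Y * ⟪X, Z⟫ + v Z * ⟪X, Y⟫) := by
    intro X Y Z
    have h1 := hdec X Y Z
    have h2 := hdec' X Y Z
    have h3 := hC' X Y Z
    rw [hv_apply, hv_apply, hv_apply]
    linear_combination h3 - h2 + Ω^2 * h1
  -- expansion lemma
  have hexp : ∀ (f : V →ₗ[ℝ] ℝ) (Z : V), ∑ i, f (b i) * ⟪b i, Z⟫ = f Z := by
    intro f Z
    conv_rhs => rw [← b.sum_repr' Z]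
    rw [map_sum]
    refine Finset.sum_congr rfl fun i _ => ?_
    rw [map_smul]
    simp [mul_comm]
  have hone : ∀ i : Fin n, ⟪b i, b i⟫ = (1 : ℝ) := fun i => by
    have := b.orthonormal
    rw [orthonormal_iff_ite] at this
    simpa using this i i
  have hvzero : ∀ Z : V, v Z = 0 := by
    intro Z
    have hs : ∑ i, (U' (b i) (b i) Z - Ω^2 * U (b i) (b i) Z)
        = Ω^2 * ((n + 2) * v Z) := by
      calc ∑ i, (U' (b i) (b i) Z - Ω^2 * U (b i) (b i) Z)
          = ∑ i : Fin n, Ω^2 * (v (b i) * ⟪b i, Z⟫ + v (b i) * ⟪b i, Z⟫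
              + v Z * ⟪b i, b i⟫) := by
            refine Finset.sum_congr rfl fun i _ => key (b i) (b i) Z
        _ = Ω^2 * ((∑ i, v (b i) * ⟪b i, Z⟫) + (∑ i, v (b i) * ⟪b i, Z⟫)
              + ∑ i : Fin n, v Z * ⟪b i, b i⟫) := by
            rw [← Finset.mul_sum, Finset.sum_add_distrib, Finset.sum_add_distrib]
        _ = Ω^2 * ((n + 2) * v Z) := by
            rw [hexp v Z]
            have : ∑ i : Fin n, v Z * ⟪b i, b i⟫ = n * v Z := by
              simp [hone, mul_comm]
            rw [this]; ring
    have hlhs : ∑ i, (U' (b i) (b i) Z - Ω^2 * U (b i) (b i) Z) = 0 := by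
      rw [Finset.sum_sub_distrib, ← Finset.mul_sum, hUtf Z, hU'tf Z]; ring
    rw [hlhs] at hs
    have hΩ2 : Ω^2 ≠ 0 := pow_ne_zero _ hΩ
    have hn2 : (n : ℝ) + 2 ≠ 0 := by positivity
    have := hs.symm
    rcases mul_eq_zero.mp this with h | h
    · exact absurd h hΩ2
    · rcases mul_eq_zero.mp h with h' | h'
      · exact absurd h' hn2
      · exact h'
  have hUU : ∀ X Y Z : V, U' X Y Z = Ω^2 * U X Y Z := by
    intro X Y Z
    have := key X Y Z
    rw [hvzero X, hvzero Y, hvzero Z] at this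
    linarith [this]
  refine ⟨?_, ?_, hUU⟩
  · intro X Y
    refine ext_inner_right ℝ fun Z => ?_
    have h1 := hUhat' X Y Z
    have h2 := hUhat X Y Z
    have hΩ2 : Ω^2 ≠ 0 := pow_ne_zero _ hΩ
    refine mul_left_cancel₀ hΩ2 ?_
    rw [h1, hUU X Y Z, h2]
  · intro X
    have := hvzero X
    rw [hv_apply] at this
    linarith
end
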